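/- arXiv:1811.04679 — 2 statements merged into one kernel-verified Lean document; each statement's English description precedes it below -/
import Mathlib

section
/- Let M = (Q, A, τ) be an invertible Mealy automaton and let V ⊂ A* be a finite set of words. Then for every word s over the enriched state set (Q ⊔ Q⁻¹)*, there exists a word t ∈ Q* such that s·v = t·v for all v ∈ V (actions of the enriched automaton M̃). -/
namespace AutGrp

/-- A Mealy automaton with state set `Q` and alphabet `A`:
`step q a = (q · a, q @ a)` (output letter, next state). -/
structure Mealy (Q A : Type*) where
  step : Q → A → A × Q

namespace Mealy

variable {Q A : Type*}

/-- The output letter `q · a`. -/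
def o (M : Mealy Q A) (q : Q) (a : A) : A := (M.step q a).1

/-- The next state `q @ a`. -/
def t (M : Mealy Q A) (q : Q) (a : A) : Q := (M.step q a).2

/-- Action of a single state on a word of letters: `q · w`. -/
def actA (M : Mealy Q A) : Q → List A → List A
  | _, [] => []
  | q, a :: w => M.o q a :: M.actA (M.t q a) w

/-- State reached from `q` after reading the word `w`: `q @ w`. -/
def stA (M : Mealy Q A) : Q → List A → Q
  | q, [] => q
  | q, a :: w => M.stA (M.t q a) w

/-- Action of a word of states on a word of letters: `s · u` (rightmost state acts first). -/
def actW (M : Mealy Q A) : List Q → List A → List A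
  | [], u => u
  | q :: s, u => M.actA q (M.actW s u)

/-- Word of states reached after reading `u`: `s @ u`. -/
def stW (M : Mealy Q A) : List Q → List A → List Q
  | [], _ => []
  | q :: s, u => M.stA q (M.actW s u) :: M.stW s u

/-- `M` is invertible if each state acts on `A` by a bijection. -/
def Invertible (M : Mealy Q A) : Prop := ∀ q : Q, Function.Bijective (M.o q)

/-- `M` is reversible if each letter acts on `Q` by a bijection. -/
def Reversible (M : Mealy Q A) : Prop := ∀ a : A, Function.Bijective (fun q => M.t q a)

theorem actA_append (M : Mealy Q A) (q : Q) (x y : List A) :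
    M.actA q (x ++ y) = M.actA q x ++ M.actA (M.stA q x) y := by
  induction x generalizing q with
  | nil => simp [actA, stA]
  | cons a w ih => simp [actA, stA, ih]

theorem stA_append (M : Mealy Q A) (q : Q) (x y : List A) :
    M.stA q (x ++ y) = M.stA (M.stA q x) y := by
  induction x generalizing q with
  | nil => simp [stA]
  | cons a w ih => simp [stA, ih]

theorem actW_append_states (M : Mealy Q A) (s u : List Q) (w : List A) :
    M.actW (s ++ u) w = M.actW s (M.actW u w) := by
  induction s with
  | nil => simp [actW]
  | cons q s ih => simp [actW, ih]

theorem actW_append (M : Mealy Q A) (s : List Q) (x y : List A) :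
    M.actW s (x ++ y) = M.actW s x ++ M.actW (M.stW s x) y := by
  induction s with
  | nil => simp [actW, stW]
  | cons q s ih => simp [actW, stW, ih, actA_append]

theorem stW_append (M : Mealy Q A) (s : List Q) (x y : List A) :
    M.stW s (x ++ y) = M.stW (M.stW s x) y := by
  induction s with
  | nil => simp [stW]
  | cons q s ih => simp [stW, actW, ih, actW_append, stA_append]

theorem actW_stW_congr (M : Mealy Q A) {p p' : List Q}
    (h : ∀ w : List A, M.actW p w = M.actW p' w) (u w : List A) :
    M.actW (M.stW p u) w = M.actW (M.stW p' u) w := by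
  have h1 := M.actW_append p u w
  have h2 := M.actW_append p' u w
  rw [h u, h (u ++ w)] at h1
  rw [h1] at h2
  exact List.append_cancel_left h2

/-- The congruence `~Q` on the free monoid `Q*`: two words of states are equivalent
iff they act identically on `A*`. -/
def conQ (M : Mealy Q A) : Con (FreeMonoid Q) where
  r s u := ∀ w : List A, M.actW s.toList w = M.actW u.toList w
  iseqv := ⟨fun _ _ => rfl, fun h w => (h w).symm, fun h1 h2 w => (h1 w).trans (h2 w)⟩
  mul' := by
    intro a b c d h1 h2 w
    simp only [FreeMonoid.toList_mul, actW_append_states]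
    rw [h2 w, h1 (M.actW d.toList w)]

/-- The congruence `~A` on the free monoid `A*`: `u ~A v` iff `s @ u = s @ v` for all `s ∈ Q*`. -/
def conA (M : Mealy Q A) : Con (FreeMonoid A) where
  r u v := ∀ s : List Q, M.stW s u.toList = M.stW s v.toList
  iseqv := ⟨fun _ _ => rfl, fun h s => (h s).symm, fun h1 h2 s => (h1 s).trans (h2 s)⟩
  mul' := by
    intro a b c d h1 h2 s
    simp only [FreeMonoid.toList_mul, stW_append]
    rw [h1 s, h2 (M.stW s b.toList)]

/-- The congruence `~D` on the free monoid `A*`: `u ~D v` iff `s @ u ~Q s @ v` for all `s ∈ Q*`. -/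
def conD (M : Mealy Q A) : Con (FreeMonoid A) where
  r u v := ∀ (s : List Q) (w : List A),
    M.actW (M.stW s u.toList) w = M.actW (M.stW s v.toList) w
  iseqv := ⟨fun _ _ _ => rfl, fun h s w => (h s w).symm,
    fun h1 h2 s w => (h1 s w).trans (h2 s w)⟩
  mul' := by
    intro a b c d h1 h2 s w
    simp only [FreeMonoid.toList_mul, stW_append]
    calc M.actW (M.stW (M.stW s a.toList) c.toList) w
        = M.actW (M.stW (M.stW s b.toList) c.toList) w :=
          M.actW_stW_congr (h1 s) c.toList w
      _ = M.actW (M.stW (M.stW s b.toList) d.toList) w := h2 _ w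

/-- The automaton semigroup (monoid) `P_M = Q* / ~Q`. -/
abbrev PM (M : Mealy Q A) : Type _ := M.conQ.Quotient

/-- The dual automaton semigroup (monoid) `D_M = A* / ~A`. -/
abbrev DM (M : Mealy Q A) : Type _ := M.conA.Quotient

/-- The monoid `D'_M = A* / ~D`. -/
abbrev DM' (M : Mealy Q A) : Type _ := M.conD.Quotient

/-- The class in `P_M` of a word of states. -/
def PMmk (M : Mealy Q A) (s : List Q) : M.PM := M.conQ.mk' (FreeMonoid.ofList s)

/-- The class in `D_M` of a word of letters. -/
def DMmk (M : Mealy Q A) (u : List A) : M.DM := M.conA.mk' (FreeMonoid.ofList u)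

/-- The class in `D'_M` of a word of letters. -/
def DM'mk (M : Mealy Q A) (u : List A) : M.DM' := M.conD.mk' (FreeMonoid.ofList u)

/-- `M` is self-invertible if `P_M` is a group. -/
def SelfInvertible (M : Mealy Q A) : Prop :=
  ∀ x : M.PM, ∃ y : M.PM, x * y = 1 ∧ y * x = 1

/-- The enriched automaton of an invertible automaton: states `Q ⊕ Q`, where `Sum.inl q` is `q`
and `Sum.inr q` is the formal inverse `q⁻¹`; `τ̃(q,a) = τ(q,a)` and
`τ̃(q⁻¹, q·a) = (a, (q@a)⁻¹)`. -/
noncomputable def enriched [Nonempty A] (M : Mealy Q A) : Mealy (Q ⊕ Q) A where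
  step := fun p b =>
    match p with
    | Sum.inl q => (M.o q b, Sum.inl (M.t q b))
    | Sum.inr q =>
        (Function.invFun (M.o q) b, Sum.inr (M.t q (Function.invFun (M.o q) b)))

/-- The monoid `Δ_M` presented by generators `Q ⊔ A` and relations `q a = (q·a)(q@a)`. -/
def deltaCon (M : Mealy Q A) : Con (FreeMonoid (Q ⊕ A)) :=
  conGen (fun w₁ w₂ => ∃ (q : Q) (a : A),
    w₁ = FreeMonoid.of (Sum.inl q) * FreeMonoid.of (Sum.inr a) ∧
    w₂ = FreeMonoid.of (Sum.inr (M.o q a)) * FreeMonoid.of (Sum.inl (M.t q a)))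

end Mealy

/-- Evaluation of a positive word in the letters `y` (for `true`) and `z` (for `false`). -/
def evalPair {S : Type*} [Monoid S] (y z : S) : List Bool → S
  | [] => 1
  | b :: l => (bif b then y else z) * evalPair y z l

/-- `y` and `z` freely generate a free subsemigroup of rank two: distinct nonempty
positive words in `y, z` represent distinct elements. -/
def IsFreePair {S : Type*} [Monoid S] (y z : S) : Prop :=
  ∀ l₁ l₂ : List Bool, l₁ ≠ [] → l₂ ≠ [] →
    evalPair y z l₁ = evalPair y z l₂ → l₁ = l₂

/-- `x` has infinite order: `{x, x², x³, …}` is infinite. -/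
def InfiniteOrder {S : Type*} [Monoid S] (x : S) : Prop :=
  (Set.range fun n : ℕ => x ^ (n + 1)).Infinite

/-- The length-`n` prefix of a sequence. -/
def seqTake {A : Type*} (ξ : ℕ → A) (n : ℕ) : List A := (List.range n).map ξ

/-- The `n`-th power `u^n` of a finite word. -/
def wpow {A : Type*} (u : List A) : ℕ → List A
  | 0 => []
  | n + 1 => u ++ wpow u n

/-- The eventually periodic sequence `u v v v ⋯`. -/
noncomputable def prePeriodic {A : Type*} [Nonempty A] (u v : List A) : ℕ → A :=
  fun n => if n < u.length then u.getD n (Classical.arbitrary A)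
    else v.getD ((n - u.length) % v.length) (Classical.arbitrary A)

/-- The periodic sequence `u^ω = u u u ⋯`. -/
noncomputable def periodic {A : Type*} [Nonempty A] (u : List A) : ℕ → A :=
  prePeriodic [] u

namespace Mealy

/-- The action of a word of states on a sequence: `s · ξ` is the sequence whose
length-`n` prefix is `s · (length-`n` prefix of `ξ`)`. -/
noncomputable def actSeq {Q A : Type*} [Nonempty A] (M : Mealy Q A)
    (s : List Q) (ξ : ℕ → A) : ℕ → A :=
  fun n => (M.actW s (seqTake ξ (n + 1))).getD n (Classical.arbitrary A)

/-- The language of all prefixes of the orbit of `a^ω` under `P_M`. -/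
def Lan {Q A : Type*} (M : Mealy Q A) (a : A) : Set (List A) :=
  {v | ∃ (k : ℕ) (s : List Q), v = M.actW s (List.replicate k a)}

/-- The degree of `v` in `Lan(a)`: the number of letters `b` with `v b ∈ Lan(a)`. -/
noncomputable def deg {Q A : Type*} (M : Mealy Q A) (a : A) (v : List A) : ℕ :=
  {b : A | v ++ [b] ∈ M.Lan a}.ncard

end Mealy

/-- A language is regular if it is recognized by a deterministic finite automaton. -/
def IsRegular {A : Type*} (L : Set (List A)) : Prop :=
  ∃ (σ : Type) (_ : Fintype σ) (dfa : DFA A σ), ∀ w : List A, w ∈ dfa.accepts ↔ w ∈ L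

end AutGrp

/-! On words of length at most `n`, a state `q` of an invertible automaton acts by a
permutation of a finite set, and the enriched state `q⁻¹` acts by its inverse. The inverse of
a permutation of a finite set is one of its powers, so `q⁻¹` agrees with some `qᵏ` on all
words of length at most `n`; substituting such a power for every inverse letter of `s`, with
`n` the maximal length of a word of `V`, gives `t`. -/

open Function Set

theorem Finite.exists_eq_iterate_of_leftInverse {α : Type*} [Finite α] {f g : α → α}
    (h : LeftInverse f g) : ∃ k, g = f^[k] := by
  let e := Equiv.ofBijective f (Finite.surjective_iff_bijective.1 h.surjective)
  refine ⟨orderOf e - 1, funext fun x => ?_⟩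
  calc g x = (e ^ orderOf e) (g x) := by rw [pow_orderOf_eq_one]; rfl
    _ = f^[orderOf e - 1] (f (g x)) := by
      rw [← Equiv.Perm.iterate_eq_pow, ← iterate_succ_apply, Nat.succ_eq_add_one,
        Nat.sub_add_cancel (orderOf_pos e)]
      rfl
    _ = f^[orderOf e - 1] x := by rw [h x]

theorem Set.Finite.exists_eqOn_iterate_of_leftInvOn {α : Type*} {s : Set α} (hs : s.Finite)
    {f g : α → α} (hf : MapsTo f s s) (hg : MapsTo g s s) (h : LeftInvOn f g s) :
    ∃ k, EqOn g (f^[k]) s := by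
  have := hs.to_subtype
  obtain ⟨k, hk⟩ := Finite.exists_eq_iterate_of_leftInverse
    (f := hf.restrict) (g := hg.restrict) fun x => Subtype.ext (h x.2)
  refine ⟨k, fun x hx => ?_⟩
  simpa [hf.coe_iterate_restrict] using congrArg Subtype.val (congrFun hk ⟨x, hx⟩)

namespace AutGrp

namespace Mealy

variable {Q A : Type*}

theorem actA_length (M : Mealy Q A) (q : Q) (w : List A) : (M.actA q w).length = w.length := by
  induction w generalizing q with
  | nil => rfl
  | cons a w ih => simp [actA, ih]

theorem actW_length (M : Mealy Q A) (s : List Q) (w : List A) :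
    (M.actW s w).length = w.length := by
  induction s with
  | nil => rfl
  | cons q s ih => simp [actW, actA_length, ih]

theorem actW_replicate (M : Mealy Q A) (q : Q) (k : ℕ) (w : List A) :
    M.actW (List.replicate k q) w = (M.actA q)^[k] w := by
  induction k with
  | zero => rfl
  | succ k ih => simp [List.replicate_succ, actW, ih, iterate_succ_apply']

theorem enriched_actA_inl [Nonempty A] (M : Mealy Q A) (q : Q) (w : List A) :
    M.enriched.actA (Sum.inl q) w = M.actA q w := by
  induction w generalizing q with
  | nil => rfl
  | cons a w ih => simp [actA, o, t, enriched, ← ih]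

theorem actA_enriched_actA_inr [Nonempty A] (M : Mealy Q A) (hinv : M.Invertible)
    (q : Q) (w : List A) : M.actA q (M.enriched.actA (Sum.inr q) w) = w := by
  induction w generalizing q with
  | nil => rfl
  | cons b w ih =>
    exact congrArg₂ List.cons (rightInverse_invFun (hinv q).2 b) (ih _)

theorem exists_replicate_eqOn_enriched_inr [Finite A] [Nonempty A] (M : Mealy Q A)
    (hinv : M.Invertible) (q : Q) (n : ℕ) :
    ∃ k, EqOn (M.enriched.actA (Sum.inr q)) (M.actW (List.replicate k q))
      {w | w.length ≤ n} := by
  have length_le {f : List A → List A} (hf : ∀ w, (f w).length = w.length) :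
      MapsTo f {w | w.length ≤ n} {w | w.length ≤ n} := fun w hw => (hf w).trans_le hw
  obtain ⟨k, hk⟩ := (List.finite_length_le A n).exists_eqOn_iterate_of_leftInvOn
    (length_le (M.actA_length q)) (length_le (M.enriched.actA_length (Sum.inr q)))
    fun w _ => M.actA_enriched_actA_inr hinv q w
  exact ⟨k, fun w hw => (hk hw).trans (M.actW_replicate q k w).symm⟩

theorem exists_actW_eqOn_enriched_actW [Finite A] [Nonempty A] (M : Mealy Q A)
    (hinv : M.Invertible) (n : ℕ) (s : List (Q ⊕ Q)) :
    ∃ t : List Q, EqOn (M.enriched.actW s) (M.actW t) {w | w.length ≤ n} := by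
  induction s with
  | nil => exact ⟨[], fun _ _ => rfl⟩
  | cons p s ih =>
    obtain ⟨ts, hts⟩ := ih
    obtain ⟨tp, htp⟩ : ∃ tp : List Q,
        EqOn (M.enriched.actA p) (M.actW tp) {w | w.length ≤ n} := by
      rcases p with q | q
      · exact ⟨[q], fun w _ => M.enriched_actA_inl q w⟩
      · obtain ⟨k, hk⟩ := M.exists_replicate_eqOn_enriched_inr hinv q n
        exact ⟨_, hk⟩
    refine ⟨tp ++ ts, fun w hw => ?_⟩
    have hts_len : (M.actW ts w).length ≤ n := (M.actW_length ts w).trans_le hw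
    rw [actW_append_states, ← htp hts_len, ← hts hw]
    rfl

end Mealy

theorem stmt9_general {Q A : Type*} [Fintype A] [Nonempty A]
    (M : Mealy Q A) (hinv : M.Invertible) (V : Set (List A)) (hV : V.Finite) :
    ∀ s : List (Q ⊕ Q), ∃ t : List Q, ∀ v ∈ V,
      (M.enriched).actW s v = M.actW t v := by
  intro s
  obtain ⟨n, hn⟩ := (hV.image List.length).bddAbove
  obtain ⟨t, ht⟩ := M.exists_actW_eqOn_enriched_actW hinv n s
  exact ⟨t, fun v hv => ht (hn (mem_image_of_mem _ hv))⟩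

/-- For an invertible Mealy automaton `M` and a finite set `V ⊂ A*`,
every word `s` over the enriched state set acts on all of `V` like some word `t ∈ Q*`. -/
theorem stmt9 {Q A : Type*} [Fintype Q] [Nonempty Q] [Fintype A] [Nonempty A]
    (M : Mealy Q A) (hinv : M.Invertible) (V : Set (List A)) (hV : V.Finite) :
    ∀ s : List (Q ⊕ Q), ∃ t : List Q, ∀ v ∈ V,
      (M.enriched).actW s v = M.actW t v :=
  stmt9_general M hinv V hV

end AutGrp
end

section
/- Let M = (Q, A, τ) be a Mealy automaton. Then the automaton semigroup P_M is finite if and only if the dual automaton semigroup D_M is finite. -/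
/-!
Each of the two semigroups embeds into a space of functions built from the other and a finite
set: the class of `u` in `D_M` is determined by the maps `q ↦ q @ (s · u)` for `[s] ∈ P_M`,
and the class of `s` in `P_M` by the maps `a ↦ (s @ u) · a` for `[u] ∈ D_M`, because
`s · (w a) = (s · w) ((s @ w) · a)`. Hence either one is finite as soon as the other is.
-/

namespace AutGrp

namespace Mealy

variable {Q A : Type*}

def actLetter (M : Mealy Q A) : List Q → A → A
  | [], a => a
  | q :: s, a => M.o q (M.actLetter s a)

variable (M : Mealy Q A)

theorem actW_nil (s : List Q) : M.actW s [] = [] := by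
  induction s with
  | nil => rfl
  | cons q s ih => simp [actW, ih, actA]

theorem actW_singleton (s : List Q) (a : A) : M.actW s [a] = [M.actLetter s a] := by
  induction s with
  | nil => rfl
  | cons q s ih => simp [actW, actLetter, ih, actA]

theorem actW_eq_of_actLetter_stW_eq {s t : List Q}
    (h : ∀ w a, M.actLetter (M.stW s w) a = M.actLetter (M.stW t w) a) (w : List A) :
    M.actW s w = M.actW t w := by
  induction w using List.reverseRecOn with
  | nil => rw [actW_nil, actW_nil]
  | append_singleton w a ih =>
    rw [actW_append, actW_append, ih, actW_singleton, actW_singleton, h]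

theorem stW_eq_of_stA_actW_eq {u v : List A}
    (h : ∀ s q, M.stA q (M.actW s u) = M.stA q (M.actW s v)) (s : List Q) :
    M.stW s u = M.stW s v := by
  induction s with
  | nil => rfl
  | cons q s ih => rw [stW, stW, h, ih]

/-- `DMtoFun [u] [s] q = q @ (s · u)`. -/
def DMtoFun : M.DM → M.PM → Q → Q := fun d p q =>
  Con.liftOn d (fun u => Con.liftOn p (fun s => M.stA q (M.actW s.toList u.toList))
      fun _ _ hst => congrArg (M.stA q) (hst u.toList))
    fun u v huv => by
      induction p using Con.induction_on with
      | H s => exact (List.cons.inj (huv (q :: s.toList))).1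

/-- `PMtoFun [s] [u] a = (s @ u) · a`. -/
def PMtoFun : M.PM → M.DM → A → A := fun p d a =>
  Con.liftOn p (fun s => Con.liftOn d (fun u => M.actLetter (M.stW s.toList u.toList) a)
      fun _ _ huv => by rw [huv s.toList])
    fun s t hst => by
      induction d using Con.induction_on with
      | H u => simpa [actW_singleton] using M.actW_stW_congr hst u.toList [a]

theorem DMtoFun_injective : Function.Injective M.DMtoFun := by
  intro d e hde
  induction d, e using Con.induction_on₂ with
  | H u v =>
    refine Con.eq _ |>.mpr (M.stW_eq_of_stA_actW_eq fun s q => ?_)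
    exact congrFun (congrFun hde (M.PMmk s)) q

theorem PMtoFun_injective : Function.Injective M.PMtoFun := by
  intro p r hpr
  induction p, r using Con.induction_on₂ with
  | H s t =>
    refine Con.eq _ |>.mpr (M.actW_eq_of_actLetter_stW_eq fun w a => ?_)
    exact congrFun (congrFun hpr (M.DMmk w)) a

end Mealy

theorem stmt12_general {Q A : Type*} [Fintype Q] [Fintype A]
    (M : Mealy Q A) :
    Finite M.PM ↔ Finite M.DM :=
  ⟨fun _ => .of_injective _ M.DMtoFun_injective, fun _ => .of_injective _ M.PMtoFun_injective⟩

/-- For a Mealy automaton `M`, the automaton semigroup `P_M` is finite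
iff the dual automaton semigroup `D_M` is finite. -/
theorem stmt12 {Q A : Type*} [Fintype Q] [Nonempty Q] [Fintype A] [Nonempty A]
    (M : Mealy Q A) :
    Finite M.PM ↔ Finite M.DM :=
  stmt12_general M

end AutGrp
end
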